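/- Let w = w_1 ⋯ w_{n²} be a square word of order n, let ŵ = w_2 ⋯ w_{n²}, and let ē = e_1 ∘ e_2 ∘ ⋯ ∘ e_{n−1} (applying e_{n−1} first). Then the word ē(ŵ)1, obtained by applying ē to ŵ and appending the letter 1, is again a square word of order n. -/

import Mathlib

/-! ### Words, crystal operators, and the major index -/

/-- The position (if any) of the rightmost letter `j` of `w` that is unpaired in the
bracket pairing of the letters `j+1` (opening brackets) and `j` (closing brackets) of `w`. -/
def unpairedPos (j : ℕ) (w : List ℕ) : Option ℕ :=
  (((List.range w.length).zip w).foldl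
    (fun (s : ℕ × Option ℕ) p =>
      if p.2 = j + 1 then (s.1 + 1, s.2)
      else if p.2 = j then (if 0 < s.1 then (s.1 - 1, s.2) else (0, some p.1))
      else s)
    (0, none)).2

/-- The crystal raising operator `e_j` on words: in the subword of `w` formed by the letters
`j` and `j+1`, pair each `j+1` (opening bracket) with a `j` (closing bracket); the unpaired
letters form a subword `j^r (j+1)^s`, and `e_j` changes this subword into
`j^(r-1) (j+1)^(s+1)`, i.e. it turns the last unpaired `j` into a `j+1`, leaving the rest
of `w` unchanged.  (If `r = 0`, we let `e_j` fix `w`.) -/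
def cryE (j : ℕ) (w : List ℕ) : List ℕ :=
  match unpairedPos j w with
  | none => w
  | some i => w.set i (j + 1)

/-- The composite operator `ē = e_1 ∘ e_2 ∘ ⋯ ∘ e_(n-1)` (applying `e_(n-1)` first). -/
def cryEbar (n : ℕ) (w : List ℕ) : List ℕ :=
  (List.range (n - 1)).reverse.foldl (fun v i => cryE (i + 1) v) w

/-- A square word of order `n`: a word with exactly `n` copies of each of the letters
`1, …, n` (and no other letters), such that every initial segment contains at least as
many letters `j+1` as letters `j`, for every `j`. -/
def IsSquareWord (n : ℕ) (w : List ℕ) : Prop :=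
  w.length = n * n ∧
  (∀ j, 1 ≤ j → j ≤ n → w.count j = n) ∧
  (∀ k j, 1 ≤ j → j < n → (w.take k).count j ≤ (w.take k).count (j + 1))

/-- The major index of a word `v = v_1 v_2 ⋯ v_l`: the sum of the descent positions,
i.e. of the positions `i` (`1 ≤ i ≤ l - 1`) such that `v_i > v_(i+1)`. -/
def majW (v : List ℕ) : ℕ :=
  ∑ i ∈ Finset.range v.length, if 0 < i ∧ v.getD i 0 < v.getD (i-1) 0 then i else 0

/-!
The first letter of a square word of order `n` is `n`, so `ŵ` is one letter `n` short and the
ballot condition between `n - 1` and `n` fails on its prefixes by at most one. Hence `ŵ` has a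
single unpaired `n - 1`, at the first prefix where the condition fails, and `e_(n-1)` turns it
into `n`: now `n - 1` is the letter that is one short, and the condition between `n - 2` and
`n - 1` fails by at most one. Going down, `ē(ŵ)` is a ballot word one letter `1` short, which the
appended `1` repairs. Raising a `d - 1` to `d` keeps `d + 1` ahead of `d`: the raised letter lies
after the letter raised to `d + 1` in the previous step, and beyond that position `d + 1` strictly
leads `d`.
-/

def unpairedStep (j : ℕ) (s : ℕ × Option ℕ) (p : ℕ × ℕ) : ℕ × Option ℕ :=
  if p.2 = j + 1 then (s.1 + 1, s.2)
  else if p.2 = j then (if 0 < s.1 then (s.1 - 1, s.2) else (0, some p.1))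
  else s

/-- The state of the scan computing `unpairedPos j v` after its first `k` letters: the number of
open brackets, and the last unpaired `j` seen. -/
def unpairedScan (j : ℕ) (v : List ℕ) (k : ℕ) : ℕ × Option ℕ :=
  (((List.range v.length).zip v).take k).foldl (unpairedStep j) (0, none)

lemma unpairedPos_eq_unpairedScan (j : ℕ) (v : List ℕ) :
    unpairedPos j v = (unpairedScan j v v.length).2 := by
  rw [unpairedScan, List.take_of_length_le (by simp)]
  rfl

lemma unpairedScan_succ (j : ℕ) {v : List ℕ} {k : ℕ} (hk : k < v.length) :
    unpairedScan j v (k + 1) = unpairedStep j (unpairedScan j v k) (k, v[k]) := by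
  have hz : ((List.range v.length).zip v)[k]? = some (k, v[k]) := by simp [hk]
  simp only [unpairedScan, List.take_add_one, hz, Option.toList_some, List.foldl_append,
    List.foldl_cons, List.foldl_nil]

lemma count_take_add_one (v : List ℕ) (m : ℕ) {k : ℕ} (hk : k < v.length) :
    (v.take (k + 1)).count m = (v.take k).count m + if v[k] = m then 1 else 0 := by
  rw [List.take_add_one, List.getElem?_eq_getElem hk, Option.toList_some, List.count_append,
    List.count_singleton]
  simp only [beq_iff_eq]

section Scan

variable {j : ℕ} {v : List ℕ}

lemma unpairedScan_of_ballot {k : ℕ} (hk : k ≤ v.length)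
    (hbal : ∀ k' ≤ k, (v.take k').count j ≤ (v.take k').count (j + 1)) :
    unpairedScan j v k = ((v.take k).count (j + 1) - (v.take k).count j, none) := by
  induction k with
  | zero => rfl
  | succ k ih =>
    have hk' : k < v.length := hk
    have hprev := hbal k (by omega)
    have hcur := hbal (k + 1) le_rfl
    rw [unpairedScan_succ j hk', ih hk'.le fun k' hk' => hbal k' (by omega)]
    rw [count_take_add_one v j hk', count_take_add_one v (j + 1) hk'] at hcur ⊢
    unfold unpairedStep
    split_ifs at hcur ⊢ <;> first | (exfalso; omega) | (simp only [Prod.mk.injEq, and_true]; omega)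

lemma unpairedScan_of_recorded {i : ℕ} (hi : unpairedScan j v (i + 1) = (0, some i))
    (hcount : (v.take (i + 1)).count j = (v.take (i + 1)).count (j + 1) + 1)
    (hb : ∀ k, (v.take k).count j ≤ (v.take k).count (j + 1) + 1) {k : ℕ} (hik : i + 1 ≤ k) :
    k ≤ v.length →
      unpairedScan j v k = ((v.take k).count (j + 1) + 1 - (v.take k).count j, some i) := by
  induction k, hik using Nat.le_induction with
  | base => intro; rw [hi, hcount]; simp
  | succ k hik ih =>
    intro hk
    have hk' : k < v.length := hk
    have hprev := hb k
    have hcur := hb (k + 1)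
    rw [unpairedScan_succ j hk', ih hk'.le]
    rw [count_take_add_one v j hk', count_take_add_one v (j + 1) hk'] at hcur ⊢
    unfold unpairedStep
    split_ifs at hcur ⊢ <;> first | (exfalso; omega) | (simp only [Prod.mk.injEq, and_true]; omega)

theorem cryE_eq_set (hb : ∀ k, (v.take k).count j ≤ (v.take k).count (j + 1) + 1)
    (htot : v.count (j + 1) + 1 = v.count j) :
    ∃ i, ∃ hi : i < v.length, v[i] = j ∧ cryE j v = v.set i (j + 1) ∧
      (v.take (i + 1)).count j = (v.take (i + 1)).count (j + 1) + 1 ∧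
      ∀ k ≤ i, (v.take k).count j ≤ (v.take k).count (j + 1) := by
  have hex : ∃ i, (v.take (i + 1)).count (j + 1) < (v.take (i + 1)).count j :=
    ⟨v.length, by rw [List.take_of_length_le (by omega)]; omega⟩
  obtain ⟨i, hlead, hbal⟩ : ∃ i, (v.take (i + 1)).count (j + 1) < (v.take (i + 1)).count j ∧
      ∀ k ≤ i, (v.take k).count j ≤ (v.take k).count (j + 1) := by
    refine ⟨Nat.find hex, Nat.find_spec hex, ?_⟩
    rintro (_ | k) hk
    · simp
    · exact not_lt.mp (Nat.find_min hex (by omega))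
  have hi : i < v.length := by
    by_contra! hi
    have := hbal v.length hi
    rw [List.take_length] at this
    omega
  have hcount : (v.take (i + 1)).count j = (v.take (i + 1)).count (j + 1) + 1 := by
    have := hb (i + 1)
    omega
  have hprev := hbal i le_rfl
  have hstep := count_take_add_one v j hi
  have hstep' := count_take_add_one v (j + 1) hi
  have hvi : v[i] = j := by
    by_contra hvi
    split_ifs at hstep hstep' <;> omega
  have hscan : unpairedScan j v (i + 1) = (0, some i) := by
    rw [unpairedScan_succ j hi, unpairedScan_of_ballot hi.le hbal]
    simp only [hvi, if_true, left_eq_add, one_ne_zero, if_false] at hstep hstep'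
    simp [unpairedStep, hvi, show (v.take i).count (j + 1) - (v.take i).count j = 0 by omega]
  refine ⟨i, hi, hvi, ?_, hcount, hbal⟩
  rw [cryE, unpairedPos_eq_unpairedScan,
    unpairedScan_of_recorded hscan hcount hb (by omega) le_rfl]

end Scan

lemma count_take_set_of_lt {v : List ℕ} {i k : ℕ} (hi : i < v.length) (hik : i < k) (a m : ℕ) :
    ((v.set i a).take k).count m
      = (v.take k).count m - (if v[i] = m then 1 else 0) + if a = m then 1 else 0 := by
  have hik' : i < (v.take k).length := by simp [hi, hik]
  rw [List.take_set, List.count_set hik']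
  simp [List.getElem_take]

lemma one_le_count_take {v : List ℕ} {i k : ℕ} (hi : i < v.length) (hik : i < k) :
    1 ≤ (v.take k).count v[i] :=
  List.count_pos_iff.mpr <| List.mem_iff_getElem.mpr ⟨i, by simp [hi, hik], by simp⟩

/-- The invariant of `ŵ` under `e_d ∘ ⋯ ∘ e_(n-1)`: the letter `d` is one short; the ballot
condition holds, except that `d - 1` may lead `d` by one, but only after position `p`; after `p`,
the letter `d + 1` strictly leads `d`. -/
structure CascadeInv (n d p : ℕ) (v : List ℕ) : Prop where
  le : d ≤ n
  length_eq : v.length = n * n - 1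
  count_eq : ∀ m, 1 ≤ m → m ≤ n → m ≠ d → v.count m = n
  count_self : v.count d = n - 1
  ballot : ∀ k m, 1 ≤ m → m < n → m + 1 ≠ d → (v.take k).count m ≤ (v.take k).count (m + 1)
  ballot_pred : 2 ≤ d → ∀ k, (v.take k).count (d - 1) ≤ (v.take k).count d + 1
  ballot_pred_of_le : 2 ≤ d → ∀ k ≤ p, (v.take k).count (d - 1) ≤ (v.take k).count d
  lead_succ : d < n → ∀ k, p < k → (v.take k).count d + 1 ≤ (v.take k).count (d + 1)

namespace CascadeInv

variable {n d p : ℕ} {v : List ℕ}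

theorem le_of_lead (h : CascadeInv n d p v) (hd : 2 ≤ d) {i : ℕ}
    (hlead : (v.take (i + 1)).count (d - 1) = (v.take (i + 1)).count d + 1) : p ≤ i := by
  by_contra! hpi
  have := h.ballot_pred_of_le hd (i + 1) hpi
  omega

theorem ballot_set (h : CascadeInv n d p v) (hd : 2 ≤ d) {i : ℕ} (hi : i < v.length)
    (hvi : v[i] = d - 1) (hpi : p ≤ i)
    (hbal : ∀ k ≤ i, (v.take k).count (d - 1) ≤ (v.take k).count d)
    {k m : ℕ} (hm1 : 1 ≤ m) (hmn : m < n) (hmd : m + 1 ≠ d - 1) :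
    ((v.set i d).take k).count m ≤ ((v.set i d).take k).count (m + 1) := by
  rcases le_or_gt k i with hk | hk
  · rw [List.take_set_of_le hk]
    by_cases hm : m + 1 = d
    · rw [show m = d - 1 by omega, Nat.sub_add_cancel (by omega : 1 ≤ d)]
      exact hbal k hk
    · exact h.ballot k m hm1 hmn hm
  rw [count_take_set_of_lt hi hk, count_take_set_of_lt hi hk, hvi]
  by_cases hm : m + 1 = d
  · rw [show m = d - 1 by omega, Nat.sub_add_cancel (by omega : 1 ≤ d)]
    have := h.ballot_pred hd k
    have := hvi ▸ one_le_count_take hi hk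
    split_ifs <;> omega
  have := h.ballot k m hm1 hmn hm
  by_cases hmd : m = d
  · subst hmd
    have := h.lead_succ hmn k (by omega)
    split_ifs <;> omega
  · split_ifs <;> omega

theorem set (h : CascadeInv n d p v) (hd : 2 ≤ d) {i : ℕ} (hi : i < v.length)
    (hvi : v[i] = d - 1)
    (hlead : (v.take (i + 1)).count (d - 1) = (v.take (i + 1)).count d + 1)
    (hbal : ∀ k ≤ i, (v.take k).count (d - 1) ≤ (v.take k).count d) :
    CascadeInv n (d - 1) i (v.set i d) := by
  have hn := h.le
  have hcount : ∀ m, (v.set i d).count m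
      = v.count m - (if d - 1 = m then 1 else 0) + if d = m then 1 else 0 := by
    intro m
    have := count_take_set_of_lt hi hi d m
    rwa [List.take_of_length_le (by simp), List.take_length, hvi] at this
  have hpred := h.count_eq (d - 1) (by omega) (by omega) (by omega)
  have hbelow : 2 ≤ d - 1 → ∀ k, (v.take k).count (d - 1 - 1) ≤ (v.take k).count (d - 1) := by
    intro hd' k
    simpa [show d - 1 - 1 + 1 = d - 1 by omega] using
      h.ballot k (d - 1 - 1) (by omega) (by omega) (by omega)
  refine ⟨by omega, by simp [h.length_eq], fun m hm1 hmn hmd => ?_, ?_,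
    fun k m hm1 hmn hmd => h.ballot_set hd hi hvi (h.le_of_lead hd hlead) hbal hm1 hmn hmd,
    fun hd' k => ?_, fun hd' k hk => ?_, fun _ k hk => ?_⟩
  · have hself := h.count_self
    rw [hcount]
    by_cases hm : m = d
    · subst hm
      split_ifs <;> omega
    · have := h.count_eq m hm1 hmn hm
      split_ifs <;> omega
  · have := h.count_self
    rw [hcount]
    split_ifs <;> omega
  · have := hbelow hd' k
    rcases le_or_gt k i with hk | hk
    · rw [List.take_set_of_le hk]
      omega
    · rw [count_take_set_of_lt hi hk, count_take_set_of_lt hi hk, hvi]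
      split_ifs <;> omega
  · rw [List.take_set_of_le hk]
    exact hbelow hd' k
  · have := h.ballot_pred hd k
    have := hvi ▸ one_le_count_take hi hk
    rw [Nat.sub_add_cancel (by omega : 1 ≤ d), count_take_set_of_lt hi hk,
      count_take_set_of_lt hi hk, hvi]
    split_ifs <;> omega

theorem cryE_pred (h : CascadeInv n d p v) (hd : 2 ≤ d) :
    ∃ q, CascadeInv n (d - 1) q (cryE (d - 1) v) := by
  have hd1 : d - 1 + 1 = d := by omega
  have hb : ∀ k, (v.take k).count (d - 1) ≤ (v.take k).count (d - 1 + 1) + 1 :=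
    hd1 ▸ h.ballot_pred hd
  have htot : v.count (d - 1 + 1) + 1 = v.count (d - 1) := by
    rw [hd1, h.count_self, h.count_eq (d - 1) (by omega) (by have := h.le; omega) (by omega)]
    have := h.le
    omega
  obtain ⟨i, hi, hvi, hcryE, hlead, hbal⟩ := cryE_eq_set hb htot
  rw [hd1] at hcryE hlead hbal
  exact ⟨i, hcryE ▸ h.set hd hi hvi hlead hbal⟩

theorem isSquareWord_append_one (h : CascadeInv n 1 p v) : IsSquareWord n (v ++ [1]) := by
  have hn := h.le
  have hcount : ∀ m, 1 ≤ m → m ≤ n → v.count m + (if 1 = m then 1 else 0) = n := by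
    intro m hm1 hmn
    by_cases hm : m = 1
    · subst hm
      have := h.count_self
      simp only [if_true]
      omega
    · simp only [h.count_eq m hm1 hmn hm, Ne.symm hm, if_false, add_zero]
  refine ⟨?_, fun m hm1 hmn => ?_, fun k m hm1 hmn => ?_⟩
  · rw [List.length_append, h.length_eq, List.length_singleton]
    have : 1 ≤ n * n := Nat.mul_le_mul hn hn
    omega
  · simpa only [List.count_append, List.count_singleton, beq_iff_eq] using hcount m hm1 hmn
  · rcases le_or_gt k v.length with hk | hk
    · rw [List.take_append_of_le_length hk]
      exact h.ballot k m hm1 hmn (by omega)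
    · have hm := hcount m hm1 hmn.le
      have hm' := hcount (m + 1) (by omega) hmn
      rw [List.take_of_length_le (by simp; omega)]
      simp only [List.count_append, List.count_singleton, beq_iff_eq]
      split_ifs at hm hm' ⊢ <;> omega

end CascadeInv

theorem cascadeInv_foldl_cryE {n : ℕ} :
    ∀ (m p : ℕ) (v : List ℕ), CascadeInv n (m + 1) p v →
      ∃ q, CascadeInv n 1 q ((List.range m).reverse.foldl (fun v i => cryE (i + 1) v) v)
  | 0, p, _, h => ⟨p, h⟩
  | m + 1, _, _, h => by
    obtain ⟨q, hq⟩ := h.cryE_pred (by omega)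
    simpa [List.range_succ] using cascadeInv_foldl_cryE m q _ hq

lemma forall_mem_of_sum_count_eq_length {α : Type*} [DecidableEq α] {l : List α} {s : Finset α}
    (h : ∑ a ∈ s, l.count a = l.length) : ∀ x ∈ l, x ∈ s := by
  have hfilter : ∑ a ∈ s, l.count a = (l.filter (· ∈ s)).length := by
    rw [← Multiset.coe_card, ← Multiset.filter_coe,
      ← Multiset.sum_count_eq_card (s := s) (by simp)]
    refine Finset.sum_congr rfl fun a ha => ?_
    rw [Multiset.count_filter_of_pos ha, Multiset.coe_count]
  exact fun x hx => of_decide_eq_true (List.length_filter_eq_length_iff.mp (hfilter ▸ h) x hx)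

namespace IsSquareWord

variable {n : ℕ} {w : List ℕ}

theorem mem_Icc (hw : IsSquareWord n w) : ∀ x ∈ w, x ∈ Finset.Icc 1 n :=
  forall_mem_of_sum_count_eq_length <| by
    rw [Finset.sum_congr rfl fun j hj => hw.2.1 j (Finset.mem_Icc.mp hj).1 (Finset.mem_Icc.mp hj).2,
      hw.1]
    simp

theorem exists_eq_cons (hn : 0 < n) (hw : IsSquareWord n w) : ∃ t, w = n :: t := by
  obtain ⟨a, t, rfl⟩ : ∃ a t, w = a :: t :=
    List.exists_cons_of_length_pos (by rw [hw.1]; positivity)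
  obtain ⟨ha1, han⟩ := Finset.mem_Icc.mp (hw.mem_Icc a List.mem_cons_self)
  refine ⟨t, ?_⟩
  by_contra hne
  have := hw.2.2 1 a ha1 (by simp at hne; omega)
  simp at this

theorem cascadeInv_drop_one (hn : 0 < n) (hw : IsSquareWord n w) :
    CascadeInv n n 0 (w.drop 1) := by
  obtain ⟨t, rfl⟩ := hw.exists_eq_cons hn
  obtain ⟨hlen, hcount, hballot⟩ := hw
  have hcount_tail : ∀ m, 1 ≤ m → m ≤ n → t.count m + (if n = m then 1 else 0) = n := by
    intro m hm1 hmn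
    simpa [List.count_cons] using hcount m hm1 hmn
  have hballot_tail : ∀ k m, 1 ≤ m → m < n → (t.take k).count m + (if n = m then 1 else 0)
      ≤ (t.take k).count (m + 1) + if n = m + 1 then 1 else 0 := by
    intro k m hm1 hmn
    simpa [List.count_cons] using hballot (k + 1) m hm1 hmn
  simp only [List.drop_one, List.tail_cons]
  refine ⟨le_rfl, by simp at hlen; omega, fun m hm1 hmn hm => ?_, ?_,
    fun k m hm1 hmn hm => ?_, fun _ k => ?_, fun _ k hk => ?_, fun h => absurd h (lt_irrefl n)⟩
  · simpa [Ne.symm hm] using hcount_tail m hm1 hmn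
  · have := hcount_tail n hn le_rfl
    rw [if_pos rfl] at this
    omega
  · have := hballot_tail k m hm1 hmn
    rwa [if_neg (by omega), if_neg (by omega), add_zero, add_zero] at this
  · have := hballot_tail k (n - 1) (by omega) (by omega)
    rw [Nat.sub_add_cancel hn, if_neg (by omega), if_pos rfl, add_zero] at this
    exact this
  · simp [Nat.le_zero.mp hk]

end IsSquareWord

/-- If `w = w₁ ⋯ w_(n²)` is a square word of order `n`, then the word `ē(ŵ)1` — obtained
from `w` by deleting the first letter, applying `ē = e₁ ∘ e₂ ∘ ⋯ ∘ e_(n-1)` (with `e_(n-1)`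
applied first), and appending the letter `1` — is again a square word of order `n`. -/
theorem ebar_of_hatted_square_word_append_one_is_square
    (n : ℕ) (hn : 0 < n) (w : List ℕ) (hw : IsSquareWord n w) :
    IsSquareWord n (cryEbar n (w.drop 1) ++ [1]) := by
  have hbase : CascadeInv n (n - 1 + 1) 0 (w.drop 1) :=
    (Nat.sub_add_cancel hn).symm ▸ hw.cascadeInv_drop_one hn
  obtain ⟨q, hq⟩ := cascadeInv_foldl_cryE (n - 1) 0 _ hbase
  exact hq.isSquareWord_append_one
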